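/- arXiv:1703.06866 — 2 statements merged into one kernel-verified Lean document; each statement's English description precedes it below -/
import Mathlib

section
/- Let θ be a positive real with θ ∉ ℚ and θ² ∈ ℚ. Then there exists a point at rational distance from all vertices of the equilateral triangle of side θ if and only if θ = λ√(p₁⋯p_r) for some positive rational λ, r ≥ 1, and distinct odd primes p₁,…,p_r each of which is either 3 or congruent to 1 mod 6. -/
noncomputable section

abbrev Pt := EuclideanSpace ℝ (Fin 2)

def IsRat (x : ℝ) : Prop := ∃ q : ℚ, (q : ℝ) = x

/-- `θ` is "good": some point of the plane is at rational distance from all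
vertices of an equilateral triangle of side length `θ`. -/
def Good (θ : ℝ) : Prop :=
  ∃ A B C M : Pt, dist A B = θ ∧ dist B C = θ ∧ dist C A = θ ∧
    IsRat (dist M A) ∧ IsRat (dist M B) ∧ IsRat (dist M C)

/-!
If `M` is at rational distances `a, b, c` from the vertices `A, B, C` of an equilateral triangle
with `θ² = q ∈ ℚ`, the inner products of `M - A` with the edges `B - A`, `C - A` are rational by
polarization, and the Gram identity for three vectors in the plane gives `3 q a² = X² + 3 Y²` with
rational `X, Y` and `a ≠ 0`. Conversely, if `θ² = g² + 3 h²` with rational `g, h`, an explicit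
point is at distances `2h`, `g + h`, `g - h` from the vertices.

Write `q = n r²` with `n` squarefree. A prime `p ∣ n` with `p = 2` or `p ≡ 2 (mod 3)` cannot
occur: `-3` is not a square modulo such an odd `p` (quadratic reciprocity), and modulo `8` when
`p = 2`, so `n Z² = U² + 3 V²` forces `p ∣ U, V, Z` and descent gives `Z = 0`. Conversely every
prime `p ≡ 1 (mod 3)` is of the form `a² + 3 b²` by Thue's lemma, and these numbers, being norms
from `ℤ[√-3]`, are closed under products.
-/

theorem legendreSym.at_neg_three {p : ℕ} [Fact p.Prime] (hp : p ≠ 2) :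
    legendreSym p (-3) = legendreSym 3 p := by
  have hodd : p % 2 = 1 := Nat.odd_iff.mp ((Fact.out : p.Prime).odd_of_ne_two hp)
  rw [legendreSym.at_neg hp, ← Nat.cast_ofNat (R := ℤ) (n := 3),
    legendreSym.quadratic_reciprocity' (by norm_num) hp, ZMod.χ₄_eq_neg_one_pow hodd, ← mul_assoc,
    show 3 / 2 = 1 from rfl, one_mul, ← pow_add, ← two_mul, pow_mul, neg_one_sq, one_pow, one_mul]

theorem ZMod.isSquare_neg_three {p : ℕ} [Fact p.Prime] (hp : p % 3 = 1) :
    IsSquare (-3 : ZMod p) := by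
  have h3 : ((-3 : ℤ) : ZMod p) ≠ 0 := by
    rw [Int.cast_neg, neg_ne_zero, Int.cast_ofNat, ← Nat.cast_ofNat, ne_eq,
      ZMod.natCast_eq_zero_iff]
    intro h
    have := (Nat.prime_dvd_prime_iff_eq Fact.out Nat.prime_three).mp h
    omega
  have := legendreSym.at_neg_three (p := p) (by omega)
  rw [legendreSym.mod 3, ← Int.natCast_mod, hp, Nat.cast_one,
    legendreSym.at_one] at this
  exact_mod_cast (legendreSym.eq_one_iff p h3).mp this

theorem legendreSym.at_neg_three_of_mod_three {p : ℕ} [Fact p.Prime] (hp2 : p ≠ 2)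
    (hp : p % 3 = 2) : legendreSym p (-3) = -1 := by
  rw [legendreSym.at_neg_three hp2, legendreSym.mod, ← Int.natCast_mod, hp]
  decide

theorem ZMod.exists_intCast_eq_mul_of_natAbs_le_sqrt (n : ℕ) [NeZero n] (t : ZMod n) :
    ∃ x y : ℤ, (x ≠ 0 ∨ y ≠ 0) ∧ x.natAbs ≤ n.sqrt ∧ y.natAbs ≤ n.sqrt ∧
      (x : ZMod n) = t * y := by
  set m := n.sqrt
  have hcard : (Finset.univ : Finset (ZMod n)).card <
      (Finset.range (m + 1) ×ˢ Finset.range (m + 1)).card := by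
    simpa [ZMod.card] using Nat.lt_succ_sqrt n
  obtain ⟨⟨x₁, y₁⟩, h₁, ⟨x₂, y₂⟩, h₂, hne, heq⟩ :=
    Finset.exists_ne_map_eq_of_card_lt_of_maps_to hcard
      (f := fun z : ℕ × ℕ => (z.1 : ZMod n) - t * z.2) (fun _ _ => Finset.mem_univ _)
  rw [Finset.mem_product, Finset.mem_range, Finset.mem_range] at h₁ h₂
  refine ⟨x₁ - x₂, y₁ - y₂, ?_, by omega, by omega, ?_⟩
  · by_contra! h
    exact hne (Prod.ext (by omega) (by omega))
  · push_cast
    linear_combination heq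

theorem Nat.Prime.exists_sq_add_three_mul_sq {p : ℕ} (hp : p.Prime) (h3 : p % 3 = 1) :
    ∃ a b : ℤ, a ^ 2 + 3 * b ^ 2 = p := by
  have := Fact.mk hp
  obtain ⟨t, ht⟩ := ZMod.isSquare_neg_three h3
  obtain ⟨x, y, hxy, hx, hy, hxt⟩ := ZMod.exists_intCast_eq_mul_of_natAbs_le_sqrt p t
  have hsq (z : ℤ) (hz : z.natAbs ≤ p.sqrt) : z ^ 2 < p := by
    have hle : z ^ 2 ≤ p := by
      rw [← Int.natAbs_sq]
      exact_mod_cast (Nat.pow_le_pow_left hz 2).trans (Nat.sqrt_le' p)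
    refine hle.lt_of_ne fun h => (Nat.prime_iff_prime_int.mp hp).not_isSquare ⟨z, ?_⟩
    rw [← h, sq]
  obtain ⟨k, hk⟩ : (p : ℤ) ∣ x ^ 2 + 3 * y ^ 2 := by
    rw [← ZMod.intCast_zmod_eq_zero_iff_dvd]
    push_cast
    rw [hxt]
    linear_combination -y ^ 2 * ht
  have hpos : 0 < x ^ 2 + 3 * y ^ 2 := by rcases hxy with h | h <;> positivity
  have hp0 : (0 : ℤ) < p := by exact_mod_cast hp.pos
  have hk0 : 0 < k := pos_of_mul_pos_right (hk ▸ hpos) hp0.le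
  have hk4 : k < 4 := lt_of_mul_lt_mul_left (by nlinarith [hsq x hx, hsq y hy]) hp0.le
  -- `k = 2` is impossible modulo `4`, and `k = 3` forces `3 ∣ x`
  interval_cases k
  · exact ⟨x, y, by linarith⟩
  · have hmod4 : ∀ x y j : ZMod 4, x ^ 2 + 3 * y ^ 2 ≠ 2 * (2 * j + 1) := by decide
    obtain ⟨j, rfl⟩ : ∃ j, p = 2 * j + 1 :=
      (hp.eq_two_or_odd'.resolve_left (by rintro rfl; omega)).exists_bit1
    refine absurd ?_ (hmod4 x y j)
    have := congrArg (Int.cast : ℤ → ZMod 4) hk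
    push_cast at this
    linear_combination this
  · obtain ⟨x', rfl⟩ : (3 : ℤ) ∣ x :=
      Int.prime_three.dvd_of_dvd_pow (n := 2) ⟨p - y ^ 2, by linarith⟩
    exact ⟨y, x', by linarith⟩

theorem exists_sq_add_three_mul_sq_prod {ι : Type*} (s : Finset ι) (f : ι → ℤ)
    (h : ∀ i ∈ s, ∃ a b : ℤ, a ^ 2 + 3 * b ^ 2 = f i) :
    ∃ a b : ℤ, a ^ 2 + 3 * b ^ 2 = ∏ i ∈ s, f i := by
  have hnorm (z : ℤ√(-3)) : Zsqrtd.normMonoidHom z = z.re ^ 2 + 3 * z.im ^ 2 := by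
    rw [Zsqrtd.normMonoidHom, MonoidHom.coe_mk, OneHom.coe_mk, Zsqrtd.norm_def]; ring
  choose! a b hab using h
  let z := ∏ i ∈ s, (⟨a i, b i⟩ : ℤ√(-3))
  refine ⟨z.re, z.im, ?_⟩
  rw [← hnorm, map_prod]
  exact Finset.prod_congr rfl fun i hi => by rw [hnorm, hab i hi]

theorem dvd_and_dvd_of_mul_sq_eq_sq_add_three_mul_sq {p : ℕ} (hp : p.Prime)
    (hbad : p = 2 ∨ p % 3 = 2) {n Z U V : ℤ} (hpn : (p : ℤ) ∣ n) (hpn2 : ¬(p : ℤ) ^ 2 ∣ n)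
    (h : n * Z ^ 2 = U ^ 2 + 3 * V ^ 2) : (p : ℤ) ∣ U ∧ (p : ℤ) ∣ V := by
  by_cases hp2 : p = 2
  · subst hp2
    obtain ⟨k, rfl⟩ : ∃ k, n = 2 * (2 * k + 1) := ⟨n / 4, by push_cast at hpn hpn2; omega⟩
    have hmod8 : ∀ k z u v : ZMod 8, 2 * (2 * k + 1) * z ^ 2 ≠ (2 * u + 1) ^ 2 + 3 * v ^ 2 ∧
        2 * (2 * k + 1) * z ^ 2 ≠ u ^ 2 + 3 * (2 * v + 1) ^ 2 := by
      decide
    have h8 := congrArg (Int.cast : ℤ → ZMod 8) h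
    push_cast at h8
    rcases Int.even_or_odd' U with ⟨u, rfl | rfl⟩ <;>
      rcases Int.even_or_odd' V with ⟨v, rfl | rfl⟩
    · exact ⟨⟨u, rfl⟩, ⟨v, rfl⟩⟩
    all_goals exfalso
    · exact (hmod8 k Z (2 * u) v).2 (by push_cast at h8 ⊢; linear_combination h8)
    · exact (hmod8 k Z u (2 * v)).1 (by push_cast at h8 ⊢; linear_combination h8)
    · exact (hmod8 k Z u (2 * v + 1)).1 (by push_cast at h8 ⊢; linear_combination h8)
  · have := Fact.mk hp
    refine legendreSym.prime_dvd_of_eq_neg_one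
      (legendreSym.at_neg_three_of_mod_three hp2 (hbad.resolve_left hp2)) ?_
    rw [show U ^ 2 - -3 * V ^ 2 = n * Z ^ 2 by linear_combination -h]
    exact dvd_mul_of_dvd_left hpn _

theorem eq_zero_of_mul_sq_eq_sq_add_three_mul_sq {p : ℕ} (hp : p.Prime)
    (hbad : p = 2 ∨ p % 3 = 2) {n Z U V : ℤ} (hpn : (p : ℤ) ∣ n) (hpn2 : ¬(p : ℤ) ^ 2 ∣ n)
    (h : n * Z ^ 2 = U ^ 2 + 3 * V ^ 2) : Z = 0 := by
  induction' hk : Z.natAbs using Nat.strong_induction_on with k ih generalizing Z U V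
  obtain ⟨⟨u, rfl⟩, ⟨v, rfl⟩⟩ := dvd_and_dvd_of_mul_sq_eq_sq_add_three_mul_sq hp hbad hpn hpn2 h
  obtain ⟨m, rfl⟩ := hpn
  have hpZ : Prime (p : ℤ) := Nat.prime_iff_prime_int.mp hp
  have hm : ¬(p : ℤ) ∣ m := fun hm => hpn2 (by rw [sq]; exact mul_dvd_mul_left _ hm)
  have h' : m * Z ^ 2 = p * (u ^ 2 + 3 * v ^ 2) :=
    mul_left_cancel₀ hpZ.ne_zero (by linear_combination h)
  obtain ⟨z, rfl⟩ : (p : ℤ) ∣ Z := hpZ.dvd_of_dvd_pow ((hpZ.dvd_or_dvd ⟨_, h'⟩).resolve_left hm)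
  have hz : p * m * z ^ 2 = u ^ 2 + 3 * v ^ 2 :=
    mul_left_cancel₀ hpZ.ne_zero (by linear_combination h')
  rw [Int.natAbs_mul, Int.natAbs_natCast] at hk
  obtain rfl | hz0 := eq_or_ne z 0
  · exact mul_zero _
  · have hlt : z.natAbs < k :=
      hk ▸ (Nat.lt_mul_iff_one_lt_left (Int.natAbs_pos.mpr hz0)).mpr hp.one_lt
    exact absurd (ih z.natAbs hlt hz rfl) hz0

theorem Rat.exists_eq_mul_sq_of_pos {q : ℚ} (hq : 0 < q) :
    ∃ (n : ℕ) (r : ℚ), Squarefree n ∧ 0 < r ∧ q = n * r ^ 2 := by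
  obtain ⟨n, b, hbn, hn⟩ := Nat.sq_mul_squarefree (q.num.natAbs * q.den)
  have hnum : (q.num.natAbs : ℚ) = q.num := by
    rw [Nat.cast_natAbs, abs_of_pos (Rat.num_pos.mpr hq)]
  have hb : b ≠ 0 := by
    rintro rfl
    simp [Rat.num_ne_zero.mpr hq.ne'] at hbn
  refine ⟨n, b / q.den, hn, by positivity, ?_⟩
  have hcast : (b : ℚ) ^ 2 * n = q.num * q.den := by rw [← hnum]; exact_mod_cast hbn
  rw [div_pow, ← mul_div_assoc, eq_div_iff (by positivity), mul_comm (n : ℚ), hcast,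
    ← Rat.mul_den_eq_num]
  ring

theorem exists_int_mul_sq_eq_of_rat {n : ℤ} {z U V : ℚ} (hz : z ≠ 0)
    (h : n * z ^ 2 = U ^ 2 + 3 * V ^ 2) :
    ∃ Z U' V' : ℤ, Z ≠ 0 ∧ n * Z ^ 2 = U' ^ 2 + 3 * V' ^ 2 := by
  set D : ℤ := z.den * U.den * V.den
  have hD : (D : ℚ) ≠ 0 := by positivity
  have hint (x : ℚ) (hx : (x.den : ℤ) ∣ D) : ∃ k : ℤ, (k : ℚ) = x * D := by
    obtain ⟨c, hc⟩ := hx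
    exact ⟨x.num * c, by rw [hc]; push_cast; rw [← Rat.mul_den_eq_num]; ring⟩
  obtain ⟨Z, hZ⟩ := hint z ⟨U.den * V.den, by ring⟩
  obtain ⟨U', hU⟩ := hint U ⟨z.den * V.den, by ring⟩
  obtain ⟨V', hV⟩ := hint V ⟨z.den * U.den, by ring⟩
  refine ⟨Z, U', V', by rintro rfl; simp_all, ?_⟩
  exact_mod_cast (show (n : ℚ) * Z ^ 2 = U' ^ 2 + 3 * V' ^ 2 by
    rw [hZ, hU, hV]; linear_combination (D : ℚ) ^ 2 * h)

theorem Pt.dist_sq (x y : Pt) : dist x y ^ 2 = (x 0 - y 0) ^ 2 + (x 1 - y 1) ^ 2 := by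
  rw [EuclideanSpace.dist_eq, Real.sq_sqrt (by positivity), Fin.sum_univ_two, Real.dist_eq,
    Real.dist_eq, sq_abs, sq_abs]

theorem Pt.dist_toLp_sq (a b c d : ℝ) :
    dist !₂[a, b] !₂[c, d] ^ 2 = (a - c) ^ 2 + (b - d) ^ 2 := by
  simp [Pt.dist_sq]

theorem isRat_dist_of_sq_eq {x y : Pt} (r : ℚ) (h : dist x y ^ 2 = (r : ℝ) ^ 2) :
    IsRat (dist x y) :=
  ⟨|r|, by rw [Rat.cast_abs, ← sq_eq_sq₀ (abs_nonneg _) dist_nonneg, sq_abs, h]⟩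

theorem good_of_sq_eq_sq_add_three_mul_sq {θ : ℝ} (hθ : 0 < θ) (g h : ℚ)
    (hgh : θ ^ 2 = (g : ℝ) ^ 2 + 3 * (h : ℝ) ^ 2) : Good θ := by
  have h3 : √3 ^ 2 = 3 := Real.sq_sqrt (by norm_num)
  have hside {x y : Pt} (hxy : dist x y ^ 2 = θ ^ 2) : dist x y = θ :=
    (sq_eq_sq₀ dist_nonneg hθ.le).mp hxy
  -- `M` is at distances `2h`, `g + h`, `g - h` from `A`, `B`, `C`
  refine ⟨!₂[0, 0], !₂[θ, 0], !₂[θ / 2, √3 * θ / 2],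
    !₂[h * (3 * h - g) / θ, √3 * h * (h + g) / θ],
    hside ?_, hside ?_, hside ?_, isRat_dist_of_sq_eq (2 * h) ?_,
    isRat_dist_of_sq_eq (g + h) ?_, isRat_dist_of_sq_eq (g - h) ?_⟩ <;>
  simp only [Pt.dist_toLp_sq] <;> push_cast <;> field_simp
  · ring
  · linear_combination θ ^ 2 * h3
  · linear_combination θ ^ 2 * h3
  · linear_combination (h : ℝ) ^ 2 * (h + g) ^ 2 * h3 - 4 * (h : ℝ) ^ 2 * hgh
  · linear_combination (h : ℝ) ^ 2 * (h + g) ^ 2 * h3 + (θ ^ 2 - 4 * h ^ 2) * hgh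
  · linear_combination (2 * h * (h + g) - θ ^ 2) ^ 2 * h3 + 4 * (θ ^ 2 - 4 * h ^ 2) * hgh

theorem three_mul_sq_eq_of_equilateral {q u₀ u₁ v₀ v₁ m₀ m₁ : ℝ} (hq : q ≠ 0)
    (hu : u₀ ^ 2 + u₁ ^ 2 = q) (hv : v₀ ^ 2 + v₁ ^ 2 = q)
    (huv : (u₀ - v₀) ^ 2 + (u₁ - v₁) ^ 2 = q) :
    3 * q * (m₀ ^ 2 + m₁ ^ 2) =
      (2 * (m₀ * u₀ + m₁ * u₁) - (m₀ * v₀ + m₁ * v₁)) ^ 2 + 3 * (m₀ * v₀ + m₁ * v₁) ^ 2 := by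
  have huv' : u₀ * v₀ + u₁ * v₁ = q / 2 := by linear_combination (hu + hv - huv) / 2
  have hdet : (u₀ * v₁ - u₁ * v₀) ^ 2 = 3 * q ^ 2 / 4 := by
    linear_combination (v₀ ^ 2 + v₁ ^ 2) * hu + q * hv - (u₀ * v₀ + u₁ * v₁ + q / 2) * huv'
  -- Gram's identity for `m` in the basis `u, v`
  have hgram : (m₀ ^ 2 + m₁ ^ 2) * (u₀ * v₁ - u₁ * v₀) ^ 2 =
      (m₀ * u₀ + m₁ * u₁) ^ 2 * (v₀ ^ 2 + v₁ ^ 2) -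
        2 * (m₀ * u₀ + m₁ * u₁) * (m₀ * v₀ + m₁ * v₁) * (u₀ * v₀ + u₁ * v₁) +
        (m₀ * v₀ + m₁ * v₁) ^ 2 * (u₀ ^ 2 + u₁ ^ 2) := by
    ring
  rw [hdet, hu, hv, huv'] at hgram
  exact mul_left_cancel₀ hq (by linear_combination 4 * hgram)

theorem exists_rat_three_mul_sq_of_good {θ : ℝ} (hirr : Irrational θ) (hG : Good θ) {q : ℚ}
    (hq : (q : ℝ) = θ ^ 2) : ∃ a X Y : ℚ, a ≠ 0 ∧ 3 * q * a ^ 2 = X ^ 2 + 3 * Y ^ 2 := by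
  obtain ⟨A, B, C, M, hAB, hBC, hCA, ⟨a, ha⟩, ⟨b, hb⟩, ⟨c, hc⟩⟩ := hG
  have ha0 : a ≠ 0 := by
    rintro rfl
    obtain rfl : M = A := dist_eq_zero.mp (by rw [← ha, Rat.cast_zero])
    exact hirr ⟨b, hb.trans hAB⟩
  have hq0 : (q : ℝ) ≠ 0 := by
    rw [hq]
    exact pow_ne_zero 2 (fun h => hirr ⟨0, by rw [h, Rat.cast_zero]⟩)
  set s : ℚ := (a ^ 2 + q - b ^ 2) / 2
  set t : ℚ := (a ^ 2 + q - c ^ 2) / 2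
  refine ⟨a, 2 * s - t, t, ha0, Rat.cast_injective (α := ℝ) ?_⟩
  have hu : (B 0 - A 0) ^ 2 + (B 1 - A 1) ^ 2 = q := by rw [hq, ← hAB, Pt.dist_sq]; ring
  have hv : (C 0 - A 0) ^ 2 + (C 1 - A 1) ^ 2 = q := by rw [hq, ← hCA, Pt.dist_sq]
  have huv : (B 0 - A 0 - (C 0 - A 0)) ^ 2 + (B 1 - A 1 - (C 1 - A 1)) ^ 2 = q := by
    rw [hq, ← hBC, Pt.dist_sq]; ring
  have hm : (M 0 - A 0) ^ 2 + (M 1 - A 1) ^ 2 = a ^ 2 := by rw [ha, Pt.dist_sq]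
  have hs : (M 0 - A 0) * (B 0 - A 0) + (M 1 - A 1) * (B 1 - A 1) = s := by
    push_cast [s]
    rw [ha, hb, hq, ← hAB, Pt.dist_sq, Pt.dist_sq, Pt.dist_sq]
    ring
  have ht : (M 0 - A 0) * (C 0 - A 0) + (M 1 - A 1) * (C 1 - A 1) = t := by
    push_cast [t]
    rw [ha, hc, hq, ← hCA, Pt.dist_sq, Pt.dist_sq, Pt.dist_sq]
    ring
  push_cast
  rw [← hm, ← hs, ← ht]
  exact three_mul_sq_eq_of_equilateral hq0 hu hv huv

theorem eq_three_or_mod_six_eq_one_of_mul_sq_eq {n : ℕ} (hn : Squarefree n) {Z U V : ℤ}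
    (hZ : Z ≠ 0) (h : n * Z ^ 2 = U ^ 2 + 3 * V ^ 2) {p : ℕ} (hp : p ∈ n.primeFactors) :
    p = 3 ∨ p % 6 = 1 := by
  have hpp := Nat.prime_of_mem_primeFactors hp
  by_contra hgood
  have hbad : p = 2 ∨ p % 3 = 2 := by
    have h3 : p % 3 ≠ 0 := fun h0 => hgood (Or.inl
      ((Nat.prime_dvd_prime_iff_eq Nat.prime_three hpp).mp (Nat.dvd_of_mod_eq_zero h0)).symm)
    rcases hpp.eq_two_or_odd with h2 | h2 <;> omega
  have hpn2 : ¬(p : ℤ) ^ 2 ∣ n := by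
    rw [sq]
    exact_mod_cast Nat.squarefree_iff_prime_squarefree.mp hn p hpp
  exact hZ (eq_zero_of_mul_sq_eq_sq_add_three_mul_sq hpp hbad
    (Int.natCast_dvd_natCast.mpr (Nat.dvd_of_mem_primeFactors hp)) hpn2 h)

theorem exists_eq_mul_sqrt_prod_of_good {θ : ℝ} (hθ : 0 < θ) (hirr : Irrational θ) {q : ℚ}
    (hq : (q : ℝ) = θ ^ 2) (hG : Good θ) :
    ∃ (lam : ℚ) (s : Finset ℕ), 0 < lam ∧ s.Nonempty ∧
      (∀ p ∈ s, Nat.Prime p ∧ Odd p ∧ (p = 3 ∨ p % 6 = 1)) ∧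
      θ = (lam : ℝ) * Real.sqrt (∏ p ∈ s, (p : ℝ)) := by
  obtain ⟨a, X, Y, ha, h⟩ := exists_rat_three_mul_sq_of_good hirr hG hq
  obtain ⟨n, r, hn, hr, rfl⟩ :=
    Rat.exists_eq_mul_sq_of_pos (q := q) (by exact_mod_cast hq ▸ pow_pos hθ 2)
  have hθn : θ = r * √(∏ p ∈ n.primeFactors, (p : ℝ)) := by
    rw [← Nat.cast_prod, Nat.prod_primeFactors_of_squarefree hn, ← Real.sqrt_sq hθ.le, ← hq]
    push_cast
    rw [Real.sqrt_mul' _ (sq_nonneg _), Real.sqrt_sq (by positivity), mul_comm]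
  -- `3 (X² + 3 Y²) = (3 Y)² + 3 X²` trades the factor `3` in front of `q` for a square
  obtain ⟨Z, U, V, hZ, hZUV⟩ := exists_int_mul_sq_eq_of_rat (n := n) (z := 3 * a * r)
    (U := 3 * Y) (V := X) (by positivity) (by push_cast; linear_combination 3 * h)
  have hn1 : 1 < n := by
    have hn0 : n ≠ 0 := by rintro rfl; exact not_squarefree_zero hn
    have hn1 : n ≠ 1 := by rintro rfl; exact hirr ⟨r, by simpa using hθn.symm⟩
    omega
  refine ⟨r, n.primeFactors, hr, Nat.nonempty_primeFactors.mpr hn1, fun p hp => ?_, hθn⟩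
  have hgood := eq_three_or_mod_six_eq_one_of_mul_sq_eq hn hZ hZUV hp
  exact ⟨Nat.prime_of_mem_primeFactors hp, Nat.odd_iff.mpr (by omega), hgood⟩

theorem stmt_8 (θ : ℝ) (hθ : 0 < θ) (hirr : Irrational θ) (hsq : IsRat (θ ^ 2)) :
    Good θ ↔
      ∃ (lam : ℚ) (s : Finset ℕ), 0 < lam ∧ s.Nonempty ∧
        (∀ p ∈ s, Nat.Prime p ∧ Odd p ∧ (p = 3 ∨ p % 6 = 1)) ∧
        θ = (lam : ℝ) * Real.sqrt (∏ p ∈ s, (p : ℝ)) := by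
  obtain ⟨q, hq⟩ := hsq
  refine ⟨exists_eq_mul_sqrt_prod_of_good hθ hirr hq, ?_⟩
  rintro ⟨lam, s, -, -, hs, rfl⟩
  obtain ⟨a, b, hab⟩ := exists_sq_add_three_mul_sq_prod s (fun p => (p : ℤ)) fun p hp => by
    rcases (hs p hp).2.2 with rfl | h6
    · exact ⟨0, 1, by norm_num⟩
    · exact (hs p hp).1.exists_sq_add_three_mul_sq (by omega)
  refine good_of_sq_eq_sq_add_three_mul_sq hθ (lam * a) (lam * b) ?_
  rw [mul_pow, Real.sq_sqrt (by positivity)]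
  have hab' : (a : ℝ) ^ 2 + 3 * (b : ℝ) ^ 2 = ∏ p ∈ s, (p : ℝ) := by
    simpa using congrArg (Int.cast : ℤ → ℝ) hab
  push_cast
  rw [← hab']
  ring
end
end

section
/- There is no point in the plane of an equilateral triangle with side length √2 at rational distance from all three vertices, while such a point exists for the equilateral triangle with side length √3 and also for side length √7. -/
noncomputable section

/-! Three vectors in a plane have vanishing Gram determinant. Applied to `B - A, C - A, M - A`
for an equilateral triangle `ABC` of side `s`, this is the classical relation
`3 (a⁴ + b⁴ + c⁴ + s⁴) = (a² + b² + c² + s²)²` between the distances `a, b, c` from `M` to the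
vertices. For `s² = 2` the relation can be rewritten as `x² + 3 y² = 6 (2a)²` with `x, y`
rational. Modulo 8 every integer solution of `x² + 3 y² = 6 z²` is even, so by descent `z = 0`;
hence `a = 0`, symmetrically `b = c = 0`, and the relation fails.
For side `√3` the centre of the triangle is at distance 1 from the vertices, and for side `√7`
there is a point at distances 2, 3, 1. -/

open Module Real RealInnerProductSpace

theorem Matrix.det_gram_eq_zero_of_finrank_lt {𝕜 E ι : Type*} [RCLike 𝕜] [NormedAddCommGroup E]
    [InnerProductSpace 𝕜 E] [FiniteDimensional 𝕜 E] [Fintype ι] [DecidableEq ι] (v : ι → E)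
    (h : finrank 𝕜 E < Fintype.card ι) : (gram 𝕜 v).det = 0 :=
  not_not.mp fun hv ↦
    h.not_ge (det_gram_ne_zero_iff_linearIndependent.mp hv).fintype_card_le_finrank

theorem real_inner_sub_sub_eq_dist_sq {E : Type*} [NormedAddCommGroup E] [InnerProductSpace ℝ E]
    (A B M : E) : ⟪B - A, M - A⟫ = (dist A B ^ 2 + dist A M ^ 2 - dist B M ^ 2) / 2 := by
  rw [real_inner_eq_norm_mul_self_add_norm_mul_self_sub_norm_sub_mul_self_div_two,
    sub_sub_sub_cancel_right, dist_comm A B, dist_comm A M, dist_eq_norm, dist_eq_norm,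
    dist_eq_norm]
  ring

theorem equilateral_dist_relation {E : Type*} [NormedAddCommGroup E] [InnerProductSpace ℝ E]
    [FiniteDimensional ℝ E] (hE : finrank ℝ E ≤ 2) {A B C M : E} {s : ℝ} (hs : s ≠ 0)
    (hAB : dist A B = s) (hBC : dist B C = s) (hCA : dist C A = s) :
    3 * (dist M A ^ 4 + dist M B ^ 4 + dist M C ^ 4 + s ^ 4) =
      (dist M A ^ 2 + dist M B ^ 2 + dist M C ^ 2 + s ^ 2) ^ 2 := by
  have hgram := Matrix.det_gram_eq_zero_of_finrank_lt (𝕜 := ℝ) ![B - A, C - A, M - A]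
    (by simp only [Fintype.card_fin]; omega)
  simp only [Matrix.det_fin_three, Matrix.gram_apply, Matrix.cons_val_zero, Matrix.cons_val_one,
    Matrix.cons_val_two, Matrix.vecHead, Matrix.vecTail, Function.comp_apply,
    Fin.succ_zero_eq_one, real_inner_sub_sub_eq_dist_sq] at hgram
  rw [dist_comm C A] at hCA
  rw [dist_comm M A, dist_comm M B, dist_comm M C]
  simp only [dist_self, dist_comm C B, dist_comm M B, dist_comm M C, hAB, hBC, hCA] at hgram
  apply mul_left_cancel₀ (pow_ne_zero 2 hs)
  linear_combination (-8) * hgram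

theorem Int.two_dvd_of_sq_add_three_mul_sq_eq_six_mul_sq {x y z : ℤ}
    (h : x ^ 2 + 3 * y ^ 2 = 6 * z ^ 2) : 2 ∣ x ∧ 2 ∣ y ∧ 2 ∣ z := by
  have mod_eight : ∀ a b c : ZMod 8,
      a ^ 2 + 3 * b ^ 2 = 6 * c ^ 2 → 4 * a = 0 ∧ 4 * b = 0 ∧ 4 * c = 0 := by
    decide
  have two_dvd_iff (n : ℤ) : 2 ∣ n ↔ 4 * (n : ZMod 8) = 0 := by
    rw [show 4 * (n : ZMod 8) = ((4 * n : ℤ) : ZMod 8) by push_cast; rfl,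
      ZMod.intCast_zmod_eq_zero_iff_dvd]
    omega
  simp only [two_dvd_iff]
  exact mod_eight _ _ _ (by exact_mod_cast congrArg (Int.cast : ℤ → ZMod 8) h)

theorem Int.eq_zero_of_sq_add_three_mul_sq_eq_six_mul_sq {x y z : ℤ}
    (h : x ^ 2 + 3 * y ^ 2 = 6 * z ^ 2) : z = 0 := by
  suffices ∀ k : ℕ, ∀ x y z : ℤ, x ^ 2 + 3 * y ^ 2 = 6 * z ^ 2 → 2 ^ k ∣ z from
    eq_zero_of_dvd_of_natAbs_lt_natAbs (this z.natAbs x y z h)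
      (by simpa [natAbs_pow] using Nat.lt_two_pow_self)
  intro k
  induction k with
  | zero => simp
  | succ k ih =>
    intro x y z h
    obtain ⟨⟨x, rfl⟩, ⟨y, rfl⟩, ⟨z, rfl⟩⟩ := two_dvd_of_sq_add_three_mul_sq_eq_six_mul_sq h
    have h4 : 4 * (x ^ 2 + 3 * y ^ 2) = 4 * (6 * z ^ 2) := by linear_combination h
    rw [pow_succ']
    exact mul_dvd_mul_left 2 (ih x y z (mul_left_cancel₀ four_ne_zero h4))

theorem Rat.eq_zero_of_sq_add_three_mul_sq_eq_six_mul_sq {x y z : ℚ}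
    (h : x ^ 2 + 3 * y ^ 2 = 6 * z ^ 2) : z = 0 := by
  have hint : ((x.num * y.den * z.den : ℤ) : ℚ) ^ 2 + 3 * ((y.num * x.den * z.den : ℤ) : ℚ) ^ 2 =
      6 * ((z.num * x.den * y.den : ℤ) : ℚ) ^ 2 := by
    push_cast
    rw [← x.mul_den_eq_num, ← y.mul_den_eq_num, ← z.mul_den_eq_num]
    linear_combination ((x.den : ℚ) * y.den * z.den) ^ 2 * h
  have hz := Int.eq_zero_of_sq_add_three_mul_sq_eq_six_mul_sq (by exact_mod_cast hint)
  simpa [Rat.den_ne_zero] using hz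

theorem Rat.equilateral_dist_relation_two_ne (a b c : ℚ) :
    3 * (a ^ 4 + b ^ 4 + c ^ 4 + 4) ≠ (a ^ 2 + b ^ 2 + c ^ 2 + 2) ^ 2 := by
  -- with `P = a² + 2 - b²` and `Q = a² + 2 - c²` the relation reads `P² - P Q + Q² = 6 a²`
  have eq_zero {a b c : ℚ}
      (h : 3 * (a ^ 4 + b ^ 4 + c ^ 4 + 4) = (a ^ 2 + b ^ 2 + c ^ 2 + 2) ^ 2) : a = 0 := by
    simpa using eq_zero_of_sq_add_three_mul_sq_eq_six_mul_sq
      (x := 2 * (a ^ 2 + 2 - b ^ 2) - (a ^ 2 + 2 - c ^ 2)) (y := a ^ 2 + 2 - c ^ 2) (z := 2 * a)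
      (by linear_combination 2 * h)
  intro h
  have ha := eq_zero h
  have hb := eq_zero (a := b) (b := c) (c := a) (by linear_combination h)
  have hc := eq_zero (a := c) (b := a) (c := b) (by linear_combination h)
  subst ha hb hc
  norm_num at h

theorem not_good_sqrt_two : ¬ Good √2 := by
  rintro ⟨A, B, C, M, hAB, hBC, hCA, ⟨a, ha⟩, ⟨b, hb⟩, ⟨c, hc⟩⟩
  have h := equilateral_dist_relation finrank_euclideanSpace_fin.le (by positivity) hAB hBC hCA
    (M := M)
  have h2 : √2 ^ 2 = 2 := sq_sqrt zero_le_two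
  rw [← ha, ← hb, ← hc, show √2 ^ 4 = (√2 ^ 2) ^ 2 by ring, h2] at h
  exact Rat.equilateral_dist_relation_two_ne a b c (by exact_mod_cast h)

theorem EuclideanSpace.dist_pair (a b c d : ℝ) :
    dist !₂[a, b] !₂[c, d] = √((a - c) ^ 2 + (b - d) ^ 2) := by
  simp [EuclideanSpace.dist_eq, Fin.sum_univ_two, Real.dist_eq, sq_abs]

theorem isRat_sqrt {x : ℝ} {q : ℚ} (hq : 0 ≤ q) (h : x = q ^ 2) : IsRat √x :=
  ⟨q, by rw [h, sqrt_sq (by exact_mod_cast hq)]⟩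

theorem good_of_rat_dist {s x y : ℝ} (hs : 0 ≤ s) {a b c : ℚ} (ha : 0 ≤ a) (hb : 0 ≤ b)
    (hc : 0 ≤ c) (hMA : x ^ 2 + y ^ 2 = a ^ 2) (hMB : (x - s) ^ 2 + y ^ 2 = b ^ 2)
    (hMC : (x - s / 2) ^ 2 + (y - √3 / 2 * s) ^ 2 = c ^ 2) : Good s := by
  have h3 : √3 ^ 2 = 3 := sq_sqrt (by norm_num)
  refine ⟨!₂[0, 0], !₂[s, 0], !₂[s / 2, √3 / 2 * s], !₂[x, y], ?_, ?_, ?_, ?_, ?_, ?_⟩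
  all_goals rw [EuclideanSpace.dist_pair]
  · rw [show (0 - s) ^ 2 + (0 - 0 : ℝ) ^ 2 = s ^ 2 by ring, sqrt_sq hs]
  · rw [show (s - s / 2) ^ 2 + (0 - √3 / 2 * s) ^ 2 = s ^ 2 by linear_combination s ^ 2 / 4 * h3,
      sqrt_sq hs]
  · rw [show (s / 2 - 0) ^ 2 + (√3 / 2 * s - 0) ^ 2 = s ^ 2 by linear_combination s ^ 2 / 4 * h3,
      sqrt_sq hs]
  · exact isRat_sqrt ha (by rw [← hMA]; ring)
  · exact isRat_sqrt hb (by rw [← hMB]; ring)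
  · exact isRat_sqrt hc hMC

theorem good_sqrt_three : Good √3 := by
  have h3 : √3 ^ 2 = 3 := sq_sqrt (by norm_num)
  refine good_of_rat_dist (x := √3 / 2) (y := 1 / 2) (a := 1) (b := 1) (c := 1) (by positivity)
    zero_le_one zero_le_one zero_le_one ?_ ?_ ?_ <;> push_cast
  · linear_combination (1 / 4) * h3
  · linear_combination (1 / 4) * h3
  · linear_combination ((√3 ^ 2 + 1) / 4) * h3

theorem good_sqrt_seven : Good √7 := by
  have h3 : √3 ^ 2 = 3 := sq_sqrt (by norm_num)
  have h7 : √7 ^ 2 = 7 := sq_sqrt (by norm_num)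
  refine good_of_rat_dist (x := √7 / 7) (y := 3 * √3 * √7 / 7) (a := 2) (b := 3) (c := 1)
    (by positivity) (by norm_num) (by norm_num) (by norm_num) ?_ ?_ ?_ <;> push_cast
  · linear_combination (9 / 49 * √7 ^ 2) * h3 + (28 / 49) * h7
  · linear_combination (9 / 49 * √7 ^ 2) * h3 + (63 / 49) * h7
  · linear_combination (1 / 196 * √7 ^ 2) * h3 + (28 / 196) * h7

theorem stmt_16 :
    ¬ Good (Real.sqrt 2) ∧ Good (Real.sqrt 3) ∧ Good (Real.sqrt 7) :=
  ⟨not_good_sqrt_two, good_sqrt_three, good_sqrt_seven⟩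
end
end
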